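/- For integers 1 ≤ a < b, a set U ⊆ ℤ is an Ulam sequence starting with a, b in the sense of the ordered-group definition (taking the ambient ordered group to be ℤ) if and only if U equals the classical Ulam sequence U(a,b). -/
import Mathlib


/-- Membership in the classical Ulam sequence `U(a,b)`: the first two elements are `a` and `b`,
and an integer `n > b` belongs to the sequence iff it can be written as a sum of two distinct
earlier members in exactly one way. -/
def UlamMem (a b : ℕ) (n : ℕ) : Prop :=
  Nat.strongRecOn n fun n ih =>
    n = a ∨ n = b ∨ (b < n ∧ ∃! p : ℕ × ℕ,
      ∃ (h1 : 0 < p.1) (h2 : p.1 < p.2) (h3 : p.1 + p.2 = n),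
        ih p.1 (by omega) ∧ ih p.2 (by omega))

/-- The classical Ulam sequence `U(a,b)`, viewed as a subset of `ℤ`. -/
def ulamSetZ (a b : ℕ) : Set ℤ := (fun u : ℕ => (u : ℤ)) '' {n | UlamMem a b n}

/-- Candidates for the next Ulam element beyond `w` in the ordered group `ℤ`: elements `q`
greater than every element of `U ∩ (−∞, w)` that can be written as `x + y` with `x ≠ y` both
in `U` in exactly one way. -/
def ulamNextZ (U : Set ℤ) (w : ℤ) : Set ℤ :=
  {q | (∀ x ∈ U, x < w → x < q) ∧
    ∃! p : ℤ × ℤ, p.1 < p.2 ∧ p.1 ∈ U ∧ p.2 ∈ U ∧ q = p.1 + p.2}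

/-- `U` is an Ulam sequence starting with `u, v` in the ordered group `ℤ`:
(1) `U ∩ (−∞, v] = {u, v}`; (2) every nonempty `U ∩ [p,q]` has a minimum and a maximum;
(3) for `w > v`, `w ∈ U` iff `w` is the smallest element of `ulamNextZ U w`. -/
def IsUlamSeqZ (u v : ℤ) (U : Set ℤ) : Prop :=
  U ∩ Set.Iic v = {u, v} ∧
  (∀ p q : ℤ, p < q → (U ∩ Set.Icc p q).Nonempty →
    (∃ m ∈ U ∩ Set.Icc p q, ∀ x ∈ U ∩ Set.Icc p q, m ≤ x) ∧
    (∃ M ∈ U ∩ Set.Icc p q, ∀ x ∈ U ∩ Set.Icc p q, x ≤ M)) ∧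
  (∀ w, v < w → (w ∈ U ↔ w ∈ ulamNextZ U w ∧ ∀ q ∈ ulamNextZ U w, w ≤ q))

theorem ulamMem_iff (a b n : ℕ) :
    UlamMem a b n ↔ n = a ∨ n = b ∨ (b < n ∧ ∃! p : ℕ × ℕ,
      0 < p.1 ∧ p.1 < p.2 ∧ p.1 + p.2 = n ∧ UlamMem a b p.1 ∧ UlamMem a b p.2) := by
  rw [UlamMem, Nat.strongRecOn, WellFounded.fix_eq]
  simp only [exists_prop]
  rfl

theorem mem_ulamSetZ' {a b : ℕ} {x : ℤ} :
    x ∈ ulamSetZ a b ↔ ∃ n : ℕ, UlamMem a b n ∧ x = (n : ℤ) := by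
  constructor
  · rintro ⟨m, hm, h⟩; exact ⟨m, hm, h.symm⟩
  · rintro ⟨n, hn, rfl⟩; exact ⟨n, hn, rfl⟩

theorem mem_ulamSetZ (a b n : ℕ) : (n : ℤ) ∈ ulamSetZ a b ↔ UlamMem a b n := by
  rw [mem_ulamSetZ']
  constructor
  · rintro ⟨m, hm, hmn⟩
    have : m = n := by exact_mod_cast hmn.symm
    exact this ▸ hm
  · intro h; exact ⟨n, h, rfl⟩

theorem ulamMem_a (a b : ℕ) : UlamMem a b a := (ulamMem_iff a b a).mpr (Or.inl rfl)
theorem ulamMem_b (a b : ℕ) : UlamMem a b b := (ulamMem_iff a b b).mpr (Or.inr (Or.inl rfl))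

theorem ulamMem_cases {a b n : ℕ} (h : UlamMem a b n) : n = a ∨ n = b ∨ b < n := by
  rcases (ulamMem_iff a b n).mp h with h | h | h
  · exact Or.inl h
  · exact Or.inr (Or.inl h)
  · exact Or.inr (Or.inr h.1)

theorem mem_ulamSetZ_ge {a b : ℕ} (hab : a < b) {x : ℤ} (hx : x ∈ ulamSetZ a b) :
    (a : ℤ) ≤ x := by
  obtain ⟨m, hm, rfl⟩ := mem_ulamSetZ'.mp hx
  rcases ulamMem_cases hm with h | h | h <;> exact_mod_cast by omega

theorem keyA {a b : ℕ} (ha : 1 ≤ a) (hab : a < b) {q : ℤ} (hq : (b : ℤ) < q) :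
    q ∈ ulamSetZ a b ↔ ∃! p : ℤ × ℤ, p.1 < p.2 ∧ p.1 ∈ ulamSetZ a b ∧
      p.2 ∈ ulamSetZ a b ∧ q = p.1 + p.2 := by
  constructor
  · intro hqT
    obtain ⟨n, hn, rfl⟩ := mem_ulamSetZ'.mp hqT
    have hbn : b < n := by exact_mod_cast hq
    rcases (ulamMem_iff a b n).mp hn with h | h | h
    · omega
    · omega
    obtain ⟨P, ⟨hP1, hP2, hP3, hPm1, hPm2⟩, hPu⟩ := h.2
    refine ⟨((P.1 : ℤ), (P.2 : ℤ)), ⟨show (P.1 : ℤ) < (P.2 : ℤ) by exact_mod_cast hP2,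
      (mem_ulamSetZ a b P.1).mpr hPm1, (mem_ulamSetZ a b P.2).mpr hPm2,
      show (n : ℤ) = (P.1 : ℤ) + (P.2 : ℤ) by exact_mod_cast hP3.symm⟩, ?_⟩
    rintro ⟨x, y⟩ ⟨hxy, hxT, hyT, hsum⟩
    obtain ⟨m, hm, rfl⟩ := mem_ulamSetZ'.mp hxT
    obtain ⟨k, hk, rfl⟩ := mem_ulamSetZ'.mp hyT
    have h0m : 0 < m := by
      have := mem_ulamSetZ_ge hab ((mem_ulamSetZ a b m).mpr hm); exact_mod_cast by omega
    have hxy' : (m : ℤ) < (k : ℤ) := hxy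
    have hmk : m < k := by exact_mod_cast hxy'
    have hsum1 : (n : ℤ) = (m : ℤ) + (k : ℤ) := hsum
    have hsum' : m + k = n := by exact_mod_cast hsum1.symm
    have := hPu (m, k) ⟨h0m, hmk, hsum', hm, hk⟩
    simp only [Prod.ext_iff] at this ⊢
    exact ⟨by exact_mod_cast this.1, by exact_mod_cast this.2⟩
  · rintro ⟨⟨x, y⟩, ⟨hxy, hxT, hyT, hsum⟩, huniq⟩
    obtain ⟨m, hm, rfl⟩ := mem_ulamSetZ'.mp hxT
    obtain ⟨k, hk, rfl⟩ := mem_ulamSetZ'.mp hyT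
    have hqn : q = ((m + k : ℕ) : ℤ) := by exact_mod_cast hsum
    rw [mem_ulamSetZ']
    refine ⟨m + k, ?_, hqn⟩
    refine (ulamMem_iff a b (m + k)).mpr (Or.inr (Or.inr ⟨by exact_mod_cast hqn ▸ hq, ?_⟩))
    have h0m : 0 < m := by
      have := mem_ulamSetZ_ge hab ((mem_ulamSetZ a b m).mpr hm); exact_mod_cast by omega
    have hxy' : (m : ℤ) < (k : ℤ) := hxy
    have hmk : m < k := by exact_mod_cast hxy'
    refine ⟨(m, k), ⟨h0m, hmk, rfl, hm, hk⟩, ?_⟩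
    rintro ⟨m', k'⟩ ⟨h1, h2, h3, h4, h5⟩
    have := huniq ((m' : ℤ), (k' : ℤ)) ⟨show (m' : ℤ) < (k' : ℤ) by exact_mod_cast h2,
      (mem_ulamSetZ a b m').mpr h4, (mem_ulamSetZ a b k').mpr h5,
      show q = (m' : ℤ) + (k' : ℤ) by rw [hqn]; exact_mod_cast h3.symm⟩
    simp only [Prod.ext_iff] at this ⊢
    exact ⟨by exact_mod_cast this.1, by exact_mod_cast this.2⟩

theorem keyMin {a b : ℕ} (ha : 1 ≤ a) (hab : a < b) {w q : ℤ} (hw : (b : ℤ) < w)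
    (hq : q ∈ ulamNextZ (ulamSetZ a b) w) : w ≤ q := by
  by_contra hlt
  push_neg at hlt
  have hbT : (b : ℤ) ∈ ulamSetZ a b := (mem_ulamSetZ a b b).mpr (ulamMem_b a b)
  have hbq : (b : ℤ) < q := hq.1 _ hbT hw
  have hqT : q ∈ ulamSetZ a b := (keyA ha hab hbq).mpr hq.2
  exact absurd (hq.1 q hqT hlt) (lt_irrefl q)

theorem crit3 {a b : ℕ} (ha : 1 ≤ a) (hab : a < b) {w : ℤ} (hw : (b : ℤ) < w) :
    w ∈ ulamSetZ a b ↔ w ∈ ulamNextZ (ulamSetZ a b) w ∧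
      ∀ q ∈ ulamNextZ (ulamSetZ a b) w, w ≤ q := by
  constructor
  · intro h
    have hmem : w ∈ ulamNextZ (ulamSetZ a b) w :=
      ⟨fun x _ hx => hx, (keyA ha hab hw).mp h⟩
    exact ⟨hmem, fun q hq => keyMin ha hab hw hq⟩
  · rintro ⟨⟨_, h2⟩, _⟩
    exact (keyA ha hab hw).mpr h2

theorem minmaxZ (T : Set ℤ) (p q : ℤ) (h : (T ∩ Set.Icc p q).Nonempty) :
    (∃ m ∈ T ∩ Set.Icc p q, ∀ x ∈ T ∩ Set.Icc p q, m ≤ x) ∧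
    (∃ M ∈ T ∩ Set.Icc p q, ∀ x ∈ T ∩ Set.Icc p q, x ≤ M) := by
  classical
  obtain ⟨lb, hlb, hlb2⟩ := Int.exists_least_of_bdd (P := fun z => z ∈ T ∩ Set.Icc p q)
    ⟨p, fun z hz => hz.2.1⟩ h
  obtain ⟨ub, hub, hub2⟩ := Int.exists_greatest_of_bdd (P := fun z => z ∈ T ∩ Set.Icc p q)
    ⟨q, fun z hz => hz.2.2⟩ h
  exact ⟨⟨lb, hlb, hlb2⟩, ⟨ub, hub, hub2⟩⟩

theorem part1 {a b : ℕ} (ha : 1 ≤ a) (hab : a < b) :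
    ulamSetZ a b ∩ Set.Iic (b : ℤ) = {(a : ℤ), (b : ℤ)} := by
  ext x
  simp only [Set.mem_inter_iff, Set.mem_Iic, Set.mem_insert_iff, Set.mem_singleton_iff]
  constructor
  · rintro ⟨hx, hxb⟩
    obtain ⟨n, hn, rfl⟩ := mem_ulamSetZ'.mp hx
    rcases ulamMem_cases hn with h | h | h
    · left; exact_mod_cast h
    · right; exact_mod_cast h
    · exfalso; have : (b : ℤ) < (n : ℤ) := by exact_mod_cast h
      omega
  · rintro (rfl | rfl)
    · exact ⟨(mem_ulamSetZ a b a).mpr (ulamMem_a a b), by exact_mod_cast hab.le⟩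
    · exact ⟨(mem_ulamSetZ a b b).mpr (ulamMem_b a b), le_rfl⟩

/-- For integers `1 ≤ a < b`, a set `U ⊆ ℤ` is an Ulam sequence starting with `a, b` in the
ordered-group sense (with ambient group `ℤ`) iff it equals the classical Ulam sequence
`U(a,b)`. -/
theorem statement17 (a b : ℕ) (ha : 1 ≤ a) (hab : a < b) (U : Set ℤ) :
    IsUlamSeqZ (a : ℤ) (b : ℤ) U ↔ U = ulamSetZ a b := by
  constructor
  · rintro ⟨H1, H2, H3⟩
    have hUge : ∀ x ∈ U, (a : ℤ) ≤ x := by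
      intro x hx
      rcases le_or_gt x (b : ℤ) with h | h
      · have hx2 : x ∈ ({(a : ℤ), (b : ℤ)} : Set ℤ) := H1 ▸ ⟨hx, h⟩
        simp only [Set.mem_insert_iff, Set.mem_singleton_iff] at hx2
        rcases hx2 with rfl | rfl
        · exact le_rfl
        · exact_mod_cast hab.le
      · have : (a : ℤ) ≤ (b : ℤ) := by exact_mod_cast hab.le
        omega
    have main : ∀ n : ℕ, ∀ x : ℤ, x ≤ (b : ℤ) + n → (x ∈ U ↔ x ∈ ulamSetZ a b) := by
      intro n
      induction n with
      | zero =>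
        intro x hx
        simp only [Nat.cast_zero, add_zero] at hx
        have h1 : x ∈ U ↔ x ∈ ({(a : ℤ), (b : ℤ)} : Set ℤ) :=
          ⟨fun h => H1 ▸ (⟨h, hx⟩ : x ∈ U ∩ Set.Iic (b : ℤ)),
           fun h => ((H1.symm ▸ h : x ∈ U ∩ Set.Iic (b : ℤ))).1⟩
        have h2 : x ∈ ulamSetZ a b ↔ x ∈ ({(a : ℤ), (b : ℤ)} : Set ℤ) :=
          ⟨fun h => (part1 ha hab) ▸ (⟨h, hx⟩ : x ∈ ulamSetZ a b ∩ Set.Iic (b : ℤ)),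
           fun h => (((part1 ha hab).symm ▸ h : x ∈ ulamSetZ a b ∩ Set.Iic (b : ℤ))).1⟩
        rw [h1, h2]
      | succ n ih =>
        intro x hx
        rcases le_or_gt x ((b : ℤ) + n) with h | h
        · exact ih x h
        have hbx : (b : ℤ) < x := by push_cast at hx ⊢; omega
        have hiff : ∀ y, y < x → (y ∈ U ↔ y ∈ ulamSetZ a b) := by
          intro y hy
          apply ih
          push_cast at hx ⊢
          omega
        have ha' : (1 : ℤ) ≤ (a : ℤ) := by exact_mod_cast ha
        have hpt : ∀ q ≤ x, ∀ p : ℤ × ℤ,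
            (p.1 < p.2 ∧ p.1 ∈ U ∧ p.2 ∈ U ∧ q = p.1 + p.2) ↔
            (p.1 < p.2 ∧ p.1 ∈ ulamSetZ a b ∧ p.2 ∈ ulamSetZ a b ∧ q = p.1 + p.2) := by
          rintro q hq ⟨y, z⟩
          constructor
          · rintro ⟨h1, h2, h3, h4⟩
            have hya : (a : ℤ) ≤ y := hUge y h2
            have hz : z < x := by omega
            have hy : y < x := by omega
            exact ⟨h1, (hiff y hy).mp h2, (hiff z hz).mp h3, h4⟩
          · rintro ⟨h1, h2, h3, h4⟩
            have hya : (a : ℤ) ≤ y := mem_ulamSetZ_ge hab h2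
            have hz : z < x := by omega
            have hy : y < x := by omega
            exact ⟨h1, (hiff y hy).mpr h2, (hiff z hz).mpr h3, h4⟩
        have hnext : ∀ q ≤ x, (q ∈ ulamNextZ U x ↔ q ∈ ulamNextZ (ulamSetZ a b) x) := by
          intro q hq
          unfold ulamNextZ
          simp only [Set.mem_setOf_eq]
          constructor
          · rintro ⟨hc1, hc2⟩
            exact ⟨fun z hz hzx => hc1 z ((hiff z hzx).mpr hz) hzx,
              (existsUnique_congr (hpt q hq)).mp hc2⟩
          · rintro ⟨hc1, hc2⟩
            exact ⟨fun z hz hzx => hc1 z ((hiff z hzx).mp hz) hzx,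
              (existsUnique_congr (hpt q hq)).mpr hc2⟩
        rw [H3 x hbx, crit3 ha hab hbx]
        constructor
        · rintro ⟨h1, h2⟩
          refine ⟨(hnext x le_rfl).mp h1, fun q hq => ?_⟩
          by_contra hlt
          push_neg at hlt
          exact absurd (h2 q ((hnext q hlt.le).mpr hq)) (not_le.mpr hlt)
        · rintro ⟨h1, h2⟩
          refine ⟨(hnext x le_rfl).mpr h1, fun q hq => ?_⟩
          by_contra hlt
          push_neg at hlt
          exact absurd (h2 q ((hnext q hlt.le).mp hq)) (not_le.mpr hlt)
    ext x
    exact main (x - b).toNat x (by omega)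
  · rintro rfl
    exact ⟨part1 ha hab, fun p q _ hne => minmaxZ _ p q hne, fun w hw => crit3 ha hab hw⟩
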